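/- For every integer k ≥ 1, the number of reduced 3×3 magic squares whose maximum entry equals 2k is equal to the number of reduced 3×3 magic squares whose magic sum equals 3k; that is, R_mc(2k) = R_ma(3k). -/
import Mathlib


/-- A 3×3 magic square with magic sum `s`: all nine entries distinct, all row
sums, column sums, the main diagonal sum and the antidiagonal sum equal `s`. -/
def IsMagicSqSum (x : Matrix (Fin 3) (Fin 3) ℤ) (s : ℤ) : Prop :=
  (Function.Injective fun p : Fin 3 × Fin 3 => x p.1 p.2) ∧
  (∀ i, ∑ j, x i j = s) ∧ (∀ j, ∑ i, x i j = s) ∧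
  x 0 0 + x 1 1 + x 2 2 = s ∧ x 0 2 + x 1 1 + x 2 0 = s

/-- A reduced 3×3 magic square: a magic square with nonnegative entries whose
minimum entry is 0. -/
def IsReducedMagicSq (x : Matrix (Fin 3) (Fin 3) ℤ) : Prop :=
  (∃ s, IsMagicSqSum x s) ∧ (∀ i j, 0 ≤ x i j) ∧ (∃ i j, x i j = 0)

/-- `Rmc t` = number of reduced 3×3 magic squares whose maximum entry equals t. -/
noncomputable def Rmc (t : ℕ) : ℕ :=
  {x : Matrix (Fin 3) (Fin 3) ℤ |
    IsReducedMagicSq x ∧ (∀ i j, x i j ≤ (t : ℤ)) ∧ (∃ i j, x i j = (t : ℤ))}.ncard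

/-- `Rma t` = number of reduced 3×3 magic squares whose magic sum equals t. -/
noncomputable def Rma (t : ℕ) : ℕ :=
  {x : Matrix (Fin 3) (Fin 3) ℤ |
    IsMagicSqSum x (t : ℤ) ∧ (∀ i j, 0 ≤ x i j) ∧ (∃ i j, x i j = 0)}.ncard

lemma magic_pairs (x : Matrix (Fin 3) (Fin 3) ℤ) (s : ℤ) (h : IsMagicSqSum x s) :
    3 * x 1 1 = s ∧ x 0 0 + x 2 2 = 2 * x 1 1 ∧ x 0 2 + x 2 0 = 2 * x 1 1 ∧
      x 0 1 + x 2 1 = 2 * x 1 1 ∧ x 1 0 + x 1 2 = 2 * x 1 1 := by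
  obtain ⟨hinj, hrow, hcol, hd, ha⟩ := h
  have r0 := hrow 0; have r1 := hrow 1; have r2 := hrow 2
  have c0 := hcol 0; have c1 := hcol 1; have c2 := hcol 2
  simp [Fin.sum_univ_three] at r0 r1 r2 c0 c1 c2
  refine ⟨by linarith, by linarith, by linarith, by linarith, by linarith⟩

theorem reduced_magic_cubic_eq_affine (k : ℕ) (hk : 1 ≤ k) :
    Rmc (2 * k) = Rma (3 * k) := by
  unfold Rmc Rma
  congr 1
  ext x
  simp only [Set.mem_setOf_eq]
  constructor
  · rintro ⟨⟨⟨s, hm⟩, hnn, i0, j0, hz⟩, hle, i1, j1, hmax⟩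
    have hinj := hm.1
    obtain ⟨hc, p1, p2, p3, p4⟩ := magic_pairs x s hm
    -- x 1 1 ≤ k
    have h1 : x 1 1 ≤ (k : ℤ) := by
      fin_cases i0 <;> fin_cases j0 <;> simp at hz
      · have := hle 2 2; omega
      · have := hle 2 1; omega
      · have := hle 2 0; omega
      · have := hle 1 2; omega
      · -- center is zero: all pairs zero, contradiction with injectivity
        exfalso
        have h00 : 0 ≤ x 0 0 := hnn 0 0
        have h22 : 0 ≤ x 2 2 := hnn 2 2
        have : x 0 0 = x 2 2 := by omega
        have := @hinj (0, 0) (2, 2) this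
        simp [Prod.ext_iff] at this
      · have := hle 1 0; omega
      · have := hle 0 2; omega
      · have := hle 0 1; omega
      · have := hle 0 0; omega
    -- x 1 1 ≥ k
    have h2 : (k : ℤ) ≤ x 1 1 := by
      have h2k : (0:ℤ) ≤ (2 * k : ℕ) := by positivity
      fin_cases i1 <;> fin_cases j1 <;> simp at hmax <;> push_cast at hmax h2k ⊢
      · have := hnn 2 2; omega
      · have := hnn 2 1; omega
      · have := hnn 2 0; omega
      · have := hnn 1 2; omega
      · -- center is max 2k
        exfalso
        have h00 : x 0 0 ≤ ((2 * k : ℕ) : ℤ) := hle 0 0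
        have h22 : x 2 2 ≤ ((2 * k : ℕ) : ℤ) := hle 2 2
        push_cast at h00 h22
        have : x 0 0 = x 2 2 := by omega
        have := @hinj (0, 0) (2, 2) this
        simp [Prod.ext_iff] at this
      · have := hnn 1 0; omega
      · have := hnn 0 2; omega
      · have := hnn 0 1; omega
      · have := hnn 0 0; omega
    have hs : s = ((3 * k : ℕ) : ℤ) := by push_cast; omega
    exact ⟨hs ▸ hm, hnn, i0, j0, hz⟩
  · rintro ⟨hm, hnn, i0, j0, hz⟩
    have hinj := hm.1
    obtain ⟨hc, p1, p2, p3, p4⟩ := magic_pairs x ((3 * k : ℕ) : ℤ) hm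
    push_cast at hc
    have hck : x 1 1 = (k : ℤ) := by omega
    have hkk : (1 : ℤ) ≤ (k : ℤ) := by exact_mod_cast hk
    refine ⟨⟨⟨((3 * k : ℕ) : ℤ), hm⟩, hnn, i0, j0, hz⟩, ?_, ?_⟩
    · intro i j
      push_cast
      fin_cases i <;> fin_cases j <;> simp
      · have := hnn 2 2; omega
      · have := hnn 2 1; omega
      · have := hnn 2 0; omega
      · have := hnn 1 2; omega
      · omega
      · have := hnn 1 0; omega
      · have := hnn 0 2; omega
      · have := hnn 0 1; omega
      · have := hnn 0 0; omega
    · -- the cell opposite to the zero cell equals 2k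
      fin_cases i0 <;> fin_cases j0 <;> simp at hz <;> push_cast
      · exact ⟨2, 2, by omega⟩
      · exact ⟨2, 1, by omega⟩
      · exact ⟨2, 0, by omega⟩
      · exact ⟨1, 2, by omega⟩
      · omega
      · exact ⟨1, 0, by omega⟩
      · exact ⟨0, 2, by omega⟩
      · exact ⟨0, 1, by omega⟩
      · exact ⟨0, 0, by omega⟩
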